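/- Let G be an amenable group, A a finite alphabet, S ⊆ G a subset, p ∈ A^S, and U = {x ∈ A^G : x|_S = p}. Let τ : A^G → A^G be a non-uniform cellular automaton with finite memory (i.e., there is a finite M ⊆ G and s : G → (A^M → A) with τ(x)(g) = s(g)((g⁻¹x)|_M)). If τ restricted to U is pre-injective (asymptotic x,y ∈ U with τ(x)=τ(y) implies x=y), then for every Følner net F of G, the upper natural mean F-entropy of τ(U) satisfies ent̄_F(τ(U)) ≥ (1 - d̄_F(S))·log|A|. -/
import Mathlib


open Filter

/-- Key combinatorial lemma: if `D` is a finite set disjoint from `S` whose right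
`M⁻¹`-translates lie in `Fi`, then `|A|^|D|` many restrictions to `Fi` of images of `U`
under `τ` are distinct, by pre-injectivity. -/
lemma aux_card_stmt15 {G : Type*} [Group G] [DecidableEq G] {A : Type*} [Fintype A] [Nonempty A]
    (Fi : Finset G) (S : Set G) (p : S → A)
    (M : Finset G) (s : G → (↥(M : Set G) → A) → A)
    (τ : (G → A) → G → A)
    (hτ : ∀ (x : G → A) (g : G), τ x g = s g (fun m => x (g * m.1)))
    (U : Set (G → A)) (hU : U = {x : G → A | ∀ h : S, x h.1 = p h})
    (hpre : ∀ x ∈ U, ∀ y ∈ U, {g : G | x g ≠ y g}.Finite → τ x = τ y → x = y)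
    (D : Finset G)
    (hDS : ∀ g ∈ D, g ∉ S)
    (hDF : ∀ g ∈ D, ∀ m ∈ M, g * m⁻¹ ∈ Fi) :
    (Fintype.card A) ^ D.card ≤ ((fun x (g : ↥(Fi : Set G)) => x g.1) '' (τ '' U)).ncard := by
  classical
  set x₀ : G → A := fun g => if h : g ∈ S then p ⟨g, h⟩ else Classical.arbitrary A with hx₀
  set X : ({g // g ∈ D} → A) → (G → A) :=
    fun u g => if h : g ∈ D then u ⟨g, h⟩ else x₀ g with hX
  have hXU : ∀ u, X u ∈ U := by
    intro u
    rw [hU]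
    intro h
    have hnD : h.1 ∉ D := fun hD => hDS _ hD h.2
    simp only [hX, hx₀, dif_neg hnD, dif_pos h.2]
  have hdiff : ∀ u v, {g | X u g ≠ X v g} ⊆ ↑D := by
    intro u v g hg
    by_contra hgD
    have hgD' : g ∉ D := by simpa using hgD
    exact hg (by simp only [hX, dif_neg hgD'])
  have hout : ∀ u v, ∀ g, g ∉ Fi → τ (X u) g = τ (X v) g := by
    intro u v g hg
    rw [hτ, hτ]
    congr 1
    funext m
    by_cases hD : g * m.1 ∈ D
    · have := hDF _ hD m.1 m.2
      rw [mul_inv_cancel_right] at this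
      exact absurd this hg
    · simp only [hX, dif_neg hD]
  set Φ : ({g // g ∈ D} → A) → (↥(Fi : Set G) → A) := fun u g => τ (X u) g.1 with hΦ
  have hΦinj : Function.Injective Φ := by
    intro u v huv
    have hτeq : τ (X u) = τ (X v) := by
      funext g
      by_cases hg : g ∈ Fi
      · exact congrFun huv ⟨g, hg⟩
      · exact hout u v g hg
    have hXeq := hpre _ (hXU u) _ (hXU v) ((D.finite_toSet).subset (hdiff u v)) hτeq
    funext d
    have h1 := congrFun hXeq d.1
    simpa only [hX, dif_pos d.2] using h1
  have hΦmem : ∀ u, Φ u ∈ ((fun x (g : ↥(Fi : Set G)) => x g.1) '' (τ '' U)) := by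
    intro u
    exact ⟨τ (X u), ⟨X u, hXU u, rfl⟩, rfl⟩
  calc (Fintype.card A) ^ D.card
      = Fintype.card ({g // g ∈ D} → A) := by
        rw [Fintype.card_fun, Fintype.card_coe]
    _ = Nat.card ({g // g ∈ D} → A) := (Nat.card_eq_fintype_card).symm
    _ = Nat.card (Set.range Φ) := (Nat.card_range_of_injective hΦinj).symm
    _ = (Set.range Φ).ncard := Nat.card_coe_set_eq _
    _ ≤ ((fun x (g : ↥(Fi : Set G)) => x g.1) '' (τ '' U)).ncard :=
        Set.ncard_le_ncard (Set.range_subset_iff.mpr hΦmem) (Set.toFinite _)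

theorem stmt_15 {G : Type*} [Group G] [DecidableEq G] {A : Type*} [Fintype A] [Nonempty A]
    {I : Type*} [Preorder I] [IsDirected I (· ≤ ·)] [Nonempty I]
    (F : I → Finset G) (hne : ∀ i, (F i).Nonempty)
    (hFol : ∀ g : G, Tendsto
      (fun i => (((F i) \ (F i).image (· * g)).card : ℝ) / (F i).card) atTop (nhds 0))
    (S : Set G) (p : S → A)
    (M : Finset G) (s : G → (↥(M : Set G) → A) → A)
    (τ : (G → A) → G → A)
    (hτ : ∀ (x : G → A) (g : G), τ x g = s g (fun m => x (g * m.1)))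
    (U : Set (G → A)) (hU : U = {x : G → A | ∀ h : S, x h.1 = p h})
    (hpre : ∀ x ∈ U, ∀ y ∈ U, {g : G | x g ≠ y g}.Finite → τ x = τ y → x = y) :
    (1 - limsup (fun i => ((S ∩ ↑(F i)).ncard : ℝ) / (F i).card) atTop) *
        Real.log (Fintype.card A) ≤
      limsup (fun i =>
        Real.log (((fun x (g : ↥((F i : Finset G) : Set G)) => x g.1) '' (τ '' U)).ncard) / (F i).card)
        atTop := by
  classical
  have hNB : (atTop : Filter I).NeBot := atTop_neBot_iff.mpr ⟨‹_›, ‹_›⟩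
  set L : ℝ := Real.log (Fintype.card A) with hLdef
  have hA1 : 1 ≤ Fintype.card A := Fintype.card_pos
  have hL0 : 0 ≤ L := Real.log_nonneg (by exact_mod_cast hA1)
  set a : I → ℝ := fun i => ((S ∩ ↑(F i)).ncard : ℝ) / (F i).card with ha
  set b : I → ℝ := fun i =>
    Real.log (((fun x (g : ↥((F i : Finset G) : Set G)) => x g.1) '' (τ '' U)).ncard) / (F i).card with hb
  set ε : I → ℝ := fun i =>
    ∑ m ∈ M, (((F i) \ (F i).image (· * m)).card : ℝ) / (F i).card with hε
  have hcpos : ∀ i, (0 : ℝ) < (F i).card := fun i => by exact_mod_cast (hne i).card_pos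
  -- U is nonempty
  have hUne : U.Nonempty := by
    refine ⟨fun g => if h : g ∈ S then p ⟨g, h⟩ else Classical.arbitrary A, ?_⟩
    rw [hU]
    intro h
    simp only [dif_pos h.2]
  have hTne : ∀ i, ((fun x (g : ↥((F i : Finset G) : Set G)) => x g.1) '' (τ '' U)).Nonempty :=
    fun i => (hUne.image τ).image _
  have hb0 : ∀ i, 0 ≤ b i := by
    intro i
    apply div_nonneg _ (hcpos i).le
    apply Real.log_nonneg
    have : 0 < ((fun x (g : ↥((F i : Finset G) : Set G)) => x g.1) '' (τ '' U)).ncard :=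
      (Set.ncard_pos (Set.toFinite _)).mpr (hTne i)
    exact_mod_cast this
  have hbL : ∀ i, b i ≤ L := by
    intro i
    rw [hb, div_le_iff₀ (hcpos i)]
    have hdom : Fintype.card ↥((F i : Finset G) : Set G) = (F i).card := by
      rw [← Nat.card_eq_fintype_card, Nat.card_coe_set_eq, Set.ncard_coe_finset]
    have h1 : ((fun x (g : ↥((F i : Finset G) : Set G)) => x g.1) '' (τ '' U)).ncard ≤
        Fintype.card A ^ (F i).card := by
      have h2 := Set.ncard_le_ncard
        (Set.subset_univ ((fun x (g : ↥((F i : Finset G) : Set G)) => x g.1) '' (τ '' U)))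
        (Set.toFinite _)
      rwa [Set.ncard_univ, Nat.card_eq_fintype_card, Fintype.card_fun, hdom] at h2
    calc Real.log (((fun x (g : ↥((F i : Finset G) : Set G)) => x g.1) '' (τ '' U)).ncard)
        ≤ Real.log ((Fintype.card A : ℝ) ^ (F i).card) := by
          apply Real.log_le_log
          · have : 0 < ((fun x (g : ↥((F i : Finset G) : Set G)) => x g.1) '' (τ '' U)).ncard :=
              (Set.ncard_pos (Set.toFinite _)).mpr (hTne i)
            exact_mod_cast this
          · exact_mod_cast h1
      _ = (F i).card * L := by rw [Real.log_pow]
      _ = L * (F i).card := by ring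
  -- key pointwise inequality
  have key : ∀ i, (1 - a i - ε i) * L ≤ b i := by
    intro i
    set E : Finset G := (F i).filter (fun g => ∀ m ∈ M, g * m⁻¹ ∈ F i) with hE
    set D : Finset G := E.filter (fun g => g ∉ S) with hD
    have hcard : (Fintype.card A) ^ D.card ≤
        ((fun x (g : ↥((F i : Finset G) : Set G)) => x g.1) '' (τ '' U)).ncard := by
      apply aux_card_stmt15 (F i) S p M s τ hτ U hU hpre D
      · intro g hg
        exact (Finset.mem_filter.mp hg).2
      · intro g hg m hm
        exact (Finset.mem_filter.mp (Finset.mem_filter.mp hg).1).2 m hm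
    have hSfin : (S ∩ ↑(F i)).ncard = ((F i).filter (· ∈ S)).card := by
      rw [← Set.ncard_coe_finset]
      congr 1
      ext g
      simp [Set.mem_inter_iff, and_comm]
    have hcount : (F i).card ≤ D.card + ((F i).filter (· ∈ S)).card +
        ∑ m ∈ M, ((F i) \ (F i).image (· * m)).card := by
      have hsub : F i ⊆ (D ∪ (F i).filter (· ∈ S)) ∪
          M.biUnion (fun m => (F i) \ (F i).image (· * m)) := by
        intro g hg
        by_cases hgE : g ∈ E
        · by_cases hgS : g ∈ S
          · exact Finset.mem_union_left _
              (Finset.mem_union_right _ (Finset.mem_filter.mpr ⟨hg, hgS⟩))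
          · exact Finset.mem_union_left _
              (Finset.mem_union_left _ (Finset.mem_filter.mpr ⟨hgE, hgS⟩))
        · rw [hE, Finset.mem_filter] at hgE
          push_neg at hgE
          obtain ⟨m, hm, hmF⟩ := hgE hg
          refine Finset.mem_union_right _ (Finset.mem_biUnion.mpr ⟨m, hm, ?_⟩)
          rw [Finset.mem_sdiff]
          refine ⟨hg, fun hgim => ?_⟩
          obtain ⟨f, hf, hfg⟩ := Finset.mem_image.mp hgim
          apply hmF
          rw [← hfg, mul_inv_cancel_right]
          exact hf
      calc (F i).card ≤ ((D ∪ (F i).filter (· ∈ S)) ∪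
            M.biUnion (fun m => (F i) \ (F i).image (· * m))).card :=
            Finset.card_le_card hsub
        _ ≤ (D ∪ (F i).filter (· ∈ S)).card +
            (M.biUnion (fun m => (F i) \ (F i).image (· * m))).card :=
            Finset.card_union_le _ _
        _ ≤ D.card + ((F i).filter (· ∈ S)).card +
            ∑ m ∈ M, ((F i) \ (F i).image (· * m)).card := by
            gcongr
            · exact Finset.card_union_le _ _
            · exact Finset.card_biUnion_le
    have hDreal : ((F i).card : ℝ) - ((S ∩ ↑(F i)).ncard : ℝ) -
        ∑ m ∈ M, (((F i) \ (F i).image (· * m)).card : ℝ) ≤ D.card := by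
      rw [hSfin]
      have h' : ((F i).card : ℝ) ≤ (D.card : ℝ) + (((F i).filter (· ∈ S)).card : ℝ) +
          ∑ m ∈ M, (((F i) \ (F i).image (· * m)).card : ℝ) := by exact_mod_cast hcount
      linarith
    have hlog : (D.card : ℝ) * L ≤
        Real.log (((fun x (g : ↥((F i : Finset G) : Set G)) => x g.1) '' (τ '' U)).ncard) := by
      calc (D.card : ℝ) * L = Real.log ((Fintype.card A : ℝ) ^ D.card) := by
            rw [Real.log_pow]
        _ ≤ Real.log (((fun x (g : ↥((F i : Finset G) : Set G)) => x g.1) '' (τ '' U)).ncard) := by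
            apply Real.log_le_log (by positivity)
            exact_mod_cast hcard
    have h2 : ((D.card : ℝ) * L) / (F i).card ≤ b i :=
      (div_le_div_iff_of_pos_right (hcpos i)).mpr hlog
    have hεeq : ε i = (∑ m ∈ M, (((F i) \ (F i).image (· * m)).card : ℝ)) / (F i).card := by
      rw [hε, Finset.sum_div]
    have h3 : (1 - a i - ε i) * L ≤ ((D.card : ℝ) * L) / (F i).card := by
      rw [ha, hεeq, le_div_iff₀ (hcpos i)]
      have hc : ((F i).card : ℝ) ≠ 0 := (hcpos i).ne'
      have e1 : (1 - ((S ∩ ↑(F i)).ncard : ℝ) / (F i).card -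
          (∑ m ∈ M, (((F i) \ (F i).image (· * m)).card : ℝ)) / (F i).card) * L * (F i).card
          = (((F i).card : ℝ) - ((S ∩ ↑(F i)).ncard : ℝ) -
            ∑ m ∈ M, (((F i) \ (F i).image (· * m)).card : ℝ)) * L := by
        field_simp
      rw [e1]
      exact mul_le_mul_of_nonneg_right hDreal hL0
    linarith
  -- boundedness facts
  have haB : IsBoundedUnder (· ≤ ·) atTop a := by
    refine isBoundedUnder_of ⟨1, fun i => ?_⟩
    have h := Set.ncard_le_ncard (Set.inter_subset_right (s := S) (t := ↑(F i))) (F i).finite_toSet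
    rw [Set.ncard_coe_finset] at h
    rw [ha]
    exact div_le_one_of_le₀ (by exact_mod_cast h) (hcpos i).le
  have hbB : IsBoundedUnder (· ≤ ·) atTop b := isBoundedUnder_of ⟨L, hbL⟩
  have hεt : Tendsto ε atTop (nhds 0) := by
    rw [hε]
    have := tendsto_finset_sum M (fun m _ => hFol m)
    simpa using this
  rcases hL0.eq_or_lt with hL | hL
  · rw [← hL, mul_zero]
    exact le_limsup_of_frequently_le ((Filter.Eventually.of_forall hb0).frequently) hbB
  · refine le_of_forall_pos_le_add fun δ hδ => ?_
    have hδ2 : 0 < δ / (2 * L) := by positivity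
    have h1 : ∀ᶠ i in atTop, a i < limsup a atTop + δ / (2 * L) :=
      eventually_lt_of_limsup_lt (lt_add_of_pos_right _ hδ2) haB
    have h2 : ∀ᶠ i in atTop, ε i * L < δ / 2 :=
      Tendsto.eventually_lt_const (by positivity)
        (by have := hεt.mul_const L; rwa [zero_mul] at this)
    have h3 : ∀ᶠ i in atTop, (1 - limsup a atTop) * L - δ ≤ b i := by
      filter_upwards [h1, h2] with i hi1 hi2
      have e2 : a i * L ≤ (limsup a atTop + δ / (2 * L)) * L :=
        mul_le_mul_of_nonneg_right hi1.le hL0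
      have e3 : (limsup a atTop + δ / (2 * L)) * L = limsup a atTop * L + δ / 2 := by
        field_simp
      rw [e3] at e2
      have e4 := key i
      have e5 : (1 - a i - ε i) * L = L - a i * L - ε i * L := by ring
      rw [e5] at e4
      have e6 : (1 - limsup a atTop) * L = L - limsup a atTop * L := by ring
      rw [e6]
      linarith
    have h4 : (1 - limsup a atTop) * L - δ ≤ limsup b atTop :=
      le_limsup_of_frequently_le h3.frequently hbB
    linarith
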